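/- Let A be a left H-quasimodule comonoid with two actions φ_A and φ̂_A, each making A a left H-quasimodule magma and comonoid, and satisfying the commutation condition φ̂_A∘(H⊗φ_A) = φ_A∘(H⊗φ̂_A)∘(c_{H,H}⊗A). Then the morphism T = (φ̂_A⊗H)∘(H⊗c_{H,A})∘(δ_H⊗A) satisfies T∘(H⊗φ_A) = (φ_A⊗H)∘(H⊗T)∘(c_{H,H}⊗A) and (δ_A⊗H)∘T = (A⊗T)∘(T⊗A)∘(H⊗δ_A). -/
import Mathlib


open TensorProduct

noncomputable section

/-- A Hopf quasigroup over a commutative ring `R` (Klim–Majid), given by a unital magma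
and comonoid structure on `H` whose counit and comultiplication are unital magma morphisms,
together with an antipode satisfying the four Hopf quasigroup identities. -/
structure HopfQuasigroup (R : Type*) [CommRing R] (H : Type*) [AddCommGroup H] [Module R H] :
    Type _ where
  mul : H ⊗[R] H →ₗ[R] H
  unit : H
  counit : H →ₗ[R] R
  comul : H →ₗ[R] H ⊗[R] H
  antipode : H →ₗ[R] H
  mul_unit_left : ∀ h : H, mul (unit ⊗ₜ[R] h) = h
  mul_unit_right : ∀ h : H, mul (h ⊗ₜ[R] unit) = h
  coassoc : (TensorProduct.assoc R H H H).toLinearMap ∘ₗ comul.rTensor H ∘ₗ comul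
      = comul.lTensor H ∘ₗ comul
  counit_left : (TensorProduct.lid R H).toLinearMap ∘ₗ counit.rTensor H ∘ₗ comul = LinearMap.id
  counit_right : (TensorProduct.rid R H).toLinearMap ∘ₗ counit.lTensor H ∘ₗ comul = LinearMap.id
  counit_unit : counit unit = 1
  counit_mul : counit ∘ₗ mul
      = (TensorProduct.lid R R).toLinearMap ∘ₗ TensorProduct.map counit counit
  comul_unit : comul unit = unit ⊗ₜ[R] unit
  comul_mul : comul ∘ₗ mul = TensorProduct.map mul mul
      ∘ₗ (TensorProduct.tensorTensorTensorComm R H H H H).toLinearMap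
      ∘ₗ TensorProduct.map comul comul
  antipode_lH₁ : mul ∘ₗ TensorProduct.map antipode mul
      ∘ₗ (TensorProduct.assoc R H H H).toLinearMap ∘ₗ comul.rTensor H
      = (TensorProduct.lid R H).toLinearMap ∘ₗ counit.rTensor H
  antipode_lH₂ : mul ∘ₗ mul.lTensor H ∘ₗ (antipode.rTensor H).lTensor H
      ∘ₗ (TensorProduct.assoc R H H H).toLinearMap ∘ₗ comul.rTensor H
      = (TensorProduct.lid R H).toLinearMap ∘ₗ counit.rTensor H
  antipode_rH₁ : mul ∘ₗ mul.rTensor H ∘ₗ (TensorProduct.assoc R H H H).symm.toLinearMap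
      ∘ₗ (antipode.rTensor H).lTensor H ∘ₗ comul.lTensor H
      = (TensorProduct.rid R H).toLinearMap ∘ₗ counit.lTensor H
  antipode_rH₂ : mul ∘ₗ TensorProduct.map mul antipode
      ∘ₗ (TensorProduct.assoc R H H H).symm.toLinearMap ∘ₗ comul.lTensor H
      = (TensorProduct.rid R H).toLinearMap ∘ₗ counit.lTensor H

section Quasimodule

variable {R : Type*} [CommRing R] {A H : Type*}
  [AddCommGroup A] [Module R A] [AddCommGroup H] [Module R H]

/-- `(A, φ)` is a left `H`-quasimodule which is both a quasimodule magma and a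
quasimodule comonoid. -/
def IsQuasimoduleMagmaComonoid (hA : HopfQuasigroup R A) (hH : HopfQuasigroup R H)
    (φ : H ⊗[R] A →ₗ[R] A) : Prop :=
  (∀ a : A, φ (hH.unit ⊗ₜ[R] a) = a) ∧
  (φ ∘ₗ φ.lTensor H ∘ₗ (TensorProduct.assoc R H H A).toLinearMap
      ∘ₗ ((hH.antipode.lTensor H ∘ₗ hH.comul).rTensor A)
    = (TensorProduct.lid R A).toLinearMap ∘ₗ hH.counit.rTensor A) ∧
  (φ ∘ₗ TensorProduct.map hH.antipode φ ∘ₗ (TensorProduct.assoc R H H A).toLinearMap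
      ∘ₗ hH.comul.rTensor A
    = (TensorProduct.lid R A).toLinearMap ∘ₗ hH.counit.rTensor A) ∧
  (∀ h : H, φ (h ⊗ₜ[R] hA.unit) = hH.counit h • hA.unit) ∧
  (hA.mul ∘ₗ TensorProduct.map φ φ
      ∘ₗ (TensorProduct.tensorTensorTensorComm R H H A A).toLinearMap
      ∘ₗ hH.comul.rTensor (A ⊗[R] A)
    = φ ∘ₗ hA.mul.lTensor H) ∧
  (hA.counit ∘ₗ φ
    = (TensorProduct.lid R R).toLinearMap ∘ₗ TensorProduct.map hH.counit hA.counit) ∧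
  (hA.comul ∘ₗ φ = TensorProduct.map φ φ
      ∘ₗ (TensorProduct.tensorTensorTensorComm R H H A A).toLinearMap
      ∘ₗ hH.comul.rTensor (A ⊗[R] A) ∘ₗ hA.comul.lTensor H)

/-- Condition (cesp1): `(H⊗φ)∘((c_{H,H}∘δ_H)⊗A) = (H⊗φ)∘(δ_H⊗A)`. -/
def Cesp1 (hH : HopfQuasigroup R H) (φ : H ⊗[R] A →ₗ[R] A) : Prop :=
  φ.lTensor H ∘ₗ (TensorProduct.assoc R H H A).toLinearMap
      ∘ₗ (((TensorProduct.comm R H H).toLinearMap ∘ₗ hH.comul).rTensor A)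
    = φ.lTensor H ∘ₗ (TensorProduct.assoc R H H A).toLinearMap ∘ₗ hH.comul.rTensor A

/-- Condition (cesp2): `φ∘(H⊗(φ∘(λ_H⊗A))) = φ∘((μ_H∘(H⊗λ_H))⊗A)`. -/
def Cesp2 (hH : HopfQuasigroup R H) (φ : H ⊗[R] A →ₗ[R] A) : Prop :=
  φ ∘ₗ (φ ∘ₗ hH.antipode.rTensor A).lTensor H
    = φ ∘ₗ ((hH.mul ∘ₗ hH.antipode.lTensor H).rTensor A)
      ∘ₗ (TensorProduct.assoc R H H A).symm.toLinearMap

/-- Condition (cesp4): `φ̂∘(H⊗φ) = φ∘(H⊗φ̂)∘(c_{H,H}⊗A)`. -/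
def Cesp4 (φ φhat : H ⊗[R] A →ₗ[R] A) : Prop :=
  φhat ∘ₗ φ.lTensor H
    = φ ∘ₗ φhat.lTensor H ∘ₗ (TensorProduct.assoc R H H A).toLinearMap
      ∘ₗ ((TensorProduct.comm R H H).toLinearMap).rTensor A
      ∘ₗ (TensorProduct.assoc R H H A).symm.toLinearMap

/-- The smash product morphism `Ψ = (φ⊗H)∘(H⊗c_{H,A})∘(δ_H⊗A) : H⊗A → A⊗H`. -/
def smashPsi (hH : HopfQuasigroup R H) (φ : H ⊗[R] A →ₗ[R] A) :
    H ⊗[R] A →ₗ[R] A ⊗[R] H :=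
  φ.rTensor H ∘ₗ (TensorProduct.assoc R H A H).symm.toLinearMap
    ∘ₗ ((TensorProduct.comm R H A).toLinearMap).lTensor H
    ∘ₗ (TensorProduct.assoc R H H A).toLinearMap ∘ₗ hH.comul.rTensor A

end Quasimodule

section AuxLemmas

variable {R : Type*} [CommRing R] {A H : Type*}
  [AddCommGroup A] [Module R A] [AddCommGroup H] [Module R H]

/-- Core of `smashPsi` without the comultiplication. -/
def psiCore (φ : H ⊗[R] A →ₗ[R] A) : (H ⊗[R] H) ⊗[R] A →ₗ[R] A ⊗[R] H :=
  φ.rTensor H ∘ₗ (TensorProduct.assoc R H A H).symm.toLinearMap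
    ∘ₗ ((TensorProduct.comm R H A).toLinearMap).lTensor H
    ∘ₗ (TensorProduct.assoc R H H A).toLinearMap

lemma psiCore_tmul (φ : H ⊗[R] A →ₗ[R] A) (x y : H) (a : A) :
    psiCore φ ((x ⊗ₜ[R] y) ⊗ₜ[R] a) = φ (x ⊗ₜ[R] a) ⊗ₜ[R] y := by
  simp [psiCore]

lemma smashPsi_apply (hH : HopfQuasigroup R H) (φ : H ⊗[R] A →ₗ[R] A) (h : H) (a : A) :
    smashPsi hH φ (h ⊗ₜ[R] a) = psiCore φ (hH.comul h ⊗ₜ[R] a) := by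
  simp [smashPsi, psiCore]

lemma cesp4_apply {φ φhat : H ⊗[R] A →ₗ[R] A} (hc4 : Cesp4 φ φhat) (x g : H) (a : A) :
    φhat (x ⊗ₜ[R] φ (g ⊗ₜ[R] a)) = φ (g ⊗ₜ[R] φhat (x ⊗ₜ[R] a)) := by
  have h := LinearMap.congr_fun hc4 (x ⊗ₜ[R] (g ⊗ₜ[R] a))
  simpa using h

/-- The doubled action `(φ⊗φ)∘(H⊗c⊗A)`. -/
def phiTwo (φ : H ⊗[R] A →ₗ[R] A) : (H ⊗[R] H) ⊗[R] (A ⊗[R] A) →ₗ[R] A ⊗[R] A :=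
  TensorProduct.map φ φ ∘ₗ (TensorProduct.tensorTensorTensorComm R H H A A).toLinearMap

lemma phiTwo_tmul (φ : H ⊗[R] A →ₗ[R] A) (x p : H) (a₁ a₂ : A) :
    phiTwo φ ((x ⊗ₜ[R] p) ⊗ₜ[R] (a₁ ⊗ₜ[R] a₂)) = φ (x ⊗ₜ[R] a₁) ⊗ₜ[R] φ (p ⊗ₜ[R] a₂) := by
  simp [phiTwo, TensorProduct.tensorTensorTensorComm_tmul]

/-- Auxiliary rearranged map for the second identity. -/
def thetaAux (φ : H ⊗[R] A →ₗ[R] A) :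
    ((H ⊗[R] H) ⊗[R] H) ⊗[R] (A ⊗[R] A) →ₗ[R] (A ⊗[R] A) ⊗[R] H :=
  (phiTwo φ).rTensor H
    ∘ₗ (TensorProduct.assoc R (H ⊗[R] H) (A ⊗[R] A) H).symm.toLinearMap
    ∘ₗ ((TensorProduct.comm R H (A ⊗[R] A)).toLinearMap).lTensor (H ⊗[R] H)
    ∘ₗ (TensorProduct.assoc R (H ⊗[R] H) H (A ⊗[R] A)).toLinearMap

lemma thetaAux_tmul (φ : H ⊗[R] A →ₗ[R] A) (w : H ⊗[R] H) (y : H) (b : A ⊗[R] A) :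
    thetaAux φ ((w ⊗ₜ[R] y) ⊗ₜ[R] b) = phiTwo φ (w ⊗ₜ[R] b) ⊗ₜ[R] y := by
  simp [thetaAux]

/-- `thetaAux` composed with the inverse associator. -/
def thetaAux' (φ : H ⊗[R] A →ₗ[R] A) :
    (H ⊗[R] (H ⊗[R] H)) ⊗[R] (A ⊗[R] A) →ₗ[R] (A ⊗[R] A) ⊗[R] H :=
  thetaAux φ ∘ₗ ((TensorProduct.assoc R H H H).symm.toLinearMap).rTensor (A ⊗[R] A)

lemma thetaAux'_tmul (φ : H ⊗[R] A →ₗ[R] A) (u : H ⊗[R] (H ⊗[R] H)) (b : A ⊗[R] A) :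
    thetaAux' φ (u ⊗ₜ[R] b)
      = thetaAux φ (((TensorProduct.assoc R H H H).symm u) ⊗ₜ[R] b) := by
  simp [thetaAux']

end AuxLemmas

/-- Given two compatible left `H`-quasimodule magma-and-comonoid actions `φ_A`, `φ̂_A`
on `A` with `φ̂_A∘(H⊗φ_A) = φ_A∘(H⊗φ̂_A)∘(c_{H,H}⊗A)`, the morphism
`T = (φ̂_A⊗H)∘(H⊗c_{H,A})∘(δ_H⊗A)` satisfies `T∘(H⊗φ_A) = (φ_A⊗H)∘(H⊗T)∘(c_{H,H}⊗A)`
and `(δ_A⊗H)∘T = (A⊗T)∘(T⊗A)∘(H⊗δ_A)`. -/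
theorem twoActions_T_identities {R : Type*} [CommRing R] {A H : Type*}
    [AddCommGroup A] [Module R A] [AddCommGroup H] [Module R H]
    (hA : HopfQuasigroup R A) (hH : HopfQuasigroup R H)
    (φA φhatA : H ⊗[R] A →ₗ[R] A)
    (hqm : IsQuasimoduleMagmaComonoid hA hH φA)
    (hqmhat : IsQuasimoduleMagmaComonoid hA hH φhatA)
    (hc4 : Cesp4 φA φhatA) :
    (smashPsi hH φhatA ∘ₗ φA.lTensor H
      = φA.rTensor H ∘ₗ (TensorProduct.assoc R H A H).symm.toLinearMap
        ∘ₗ (smashPsi hH φhatA).lTensor H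
        ∘ₗ (TensorProduct.assoc R H H A).toLinearMap
        ∘ₗ ((TensorProduct.comm R H H).toLinearMap).rTensor A
        ∘ₗ (TensorProduct.assoc R H H A).symm.toLinearMap) ∧
    (hA.comul.rTensor H ∘ₗ smashPsi hH φhatA
      = (TensorProduct.assoc R A A H).symm.toLinearMap
        ∘ₗ (smashPsi hH φhatA).lTensor A
        ∘ₗ (TensorProduct.assoc R A H A).toLinearMap
        ∘ₗ (smashPsi hH φhatA).rTensor A
        ∘ₗ (TensorProduct.assoc R H A A).symm.toLinearMap
        ∘ₗ hA.comul.lTensor H) := by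
  have hcomul : ∀ (x : H) (a : A), hA.comul (φhatA (x ⊗ₜ[R] a))
      = phiTwo φhatA (hH.comul x ⊗ₜ[R] hA.comul a) := by
    intro x a
    have h := LinearMap.congr_fun hqmhat.2.2.2.2.2.2 (x ⊗ₜ[R] a)
    simpa [phiTwo] using h
  constructor
  · apply TensorProduct.ext'
    intro h z
    induction z using TensorProduct.induction_on with
    | zero => simp
    | tmul g a =>
      simp only [LinearMap.comp_apply, LinearEquiv.coe_coe, LinearMap.lTensor_tmul,
        LinearMap.rTensor_tmul, TensorProduct.assoc_symm_tmul, TensorProduct.assoc_tmul,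
        TensorProduct.comm_tmul, smashPsi_apply]
      generalize hH.comul h = w
      induction w using TensorProduct.induction_on with
      | zero => simp
      | tmul x y =>
        simp [psiCore_tmul, TensorProduct.assoc_symm_tmul, cesp4_apply hc4]
      | add u v hu hv =>
        simp only [add_tmul, map_add, tmul_add, hu, hv]
    | add u v hu hv =>
      simp only [tmul_add, map_add, hu, hv]
  · have L1 : ∀ (w : H ⊗[R] H) (a : A),
        hA.comul.rTensor H (psiCore φhatA (w ⊗ₜ[R] a))
          = thetaAux φhatA ((hH.comul.rTensor H w) ⊗ₜ[R] hA.comul a) := by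
      intro w a
      induction w using TensorProduct.induction_on with
      | zero => simp
      | tmul x y =>
        simp [psiCore_tmul, thetaAux_tmul, hcomul]
      | add u v hu hv =>
        simp only [add_tmul, map_add, hu, hv]
    have L2 : ∀ (w : H ⊗[R] H) (a₁ a₂ : A),
        (TensorProduct.assoc R A A H).symm
            ((smashPsi hH φhatA).lTensor A
              ((TensorProduct.assoc R A H A) (psiCore φhatA (w ⊗ₜ[R] a₁) ⊗ₜ[R] a₂)))
          = thetaAux' φhatA ((hH.comul.lTensor H w) ⊗ₜ[R] (a₁ ⊗ₜ[R] a₂)) := by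
      intro w a₁ a₂
      induction w using TensorProduct.induction_on with
      | zero => simp
      | tmul x y =>
        simp only [psiCore_tmul, TensorProduct.assoc_tmul, LinearMap.lTensor_tmul,
          smashPsi_apply]
        generalize hH.comul y = v
        induction v using TensorProduct.induction_on with
        | zero => simp
        | tmul p q =>
          simp [psiCore_tmul, thetaAux'_tmul, thetaAux_tmul, phiTwo_tmul,
            TensorProduct.assoc_symm_tmul]
        | add u v hu hv =>
          simp only [map_add, tmul_add, add_tmul, hu, hv]
      | add u v hu hv =>
        simp only [add_tmul, map_add, tmul_add, hu, hv]
    apply TensorProduct.ext'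
    intro h a
    have hδ := LinearMap.congr_fun hH.coassoc h
    simp only [LinearMap.comp_apply, LinearEquiv.coe_coe] at hδ
    have hδ' : hH.comul.rTensor H (hH.comul h)
        = (TensorProduct.assoc R H H H).symm (hH.comul.lTensor H (hH.comul h)) := by
      rw [← hδ, LinearEquiv.symm_apply_apply]
    simp only [LinearMap.comp_apply, LinearEquiv.coe_coe, LinearMap.lTensor_tmul]
    rw [smashPsi_apply, L1, hδ', ← thetaAux'_tmul]
    generalize hA.comul a = b
    induction b using TensorProduct.induction_on with
    | zero => simp
    | tmul a₁ a₂ =>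
      simp only [TensorProduct.assoc_symm_tmul, LinearMap.rTensor_tmul, LinearEquiv.coe_coe]
      rw [smashPsi_apply, L2]
    | add b₁ b₂ hb₁ hb₂ =>
      simp only [tmul_add, map_add, hb₁, hb₂]
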